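/- arXiv:2001.05344 — 2 statements merged into one kernel-verified Lean document; each statement's English description precedes it below -/
import Mathlib

section
/- A vanishing primitive forces a flat dose-response curve (implication (3)⇒(2) of Proposition 1): Suppose in addition that the restriction of θ₀ to 𝒜₀ is continuous. If Ω₀(a) = 0 for every a ∈ ℝ, then θ₀(a) = γ₀ for every a ∈ 𝒜₀. -/
open MeasureTheory Set Filter

/-- Topological support of a Borel measure on ℝ. -/
def msupport (F₀ : Measure ℝ) : Set ℝ := {x : ℝ | ∀ U ∈ nhds x, F₀ U ≠ 0}

/-- Cumulative distribution function of `F₀`. -/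
noncomputable def cdf0 (F₀ : Measure ℝ) (a : ℝ) : ℝ := (F₀ (Iic a)).toReal

/-- `γ₀ := ∫ θ₀ dF₀`. -/
noncomputable def gamma0 (F₀ : Measure ℝ) (θ₀ : ℝ → ℝ) : ℝ := ∫ u, θ₀ u ∂F₀

/-- `Γ₀(a) := ∫_{(-∞,a]} θ₀ dF₀`. -/
noncomputable def Gamma0 (F₀ : Measure ℝ) (θ₀ : ℝ → ℝ) (a : ℝ) : ℝ := ∫ u in Iic a, θ₀ u ∂F₀

/-- `Ω₀(a) := Γ₀(a) − γ₀ F₀(a)`. -/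
noncomputable def Omega0 (F₀ : Measure ℝ) (θ₀ : ℝ → ℝ) (a : ℝ) : ℝ :=
  Gamma0 F₀ θ₀ a - gamma0 F₀ θ₀ * cdf0 F₀ a

/-!
`Ω₀ ≡ 0` says that `θ₀ − γ₀` has zero integral over every half-line `(−∞, a]`. Half-lines
determine finite measures, so the positive and negative parts of `θ₀ − γ₀` have the same
indefinite integral, hence `θ₀ = γ₀` almost everywhere. Every neighbourhood of a point of the
support has positive mass, so each such point is a limit of points of this conull set, and
continuity on the support gives `θ₀ = γ₀` there.
-/

lemma msupport_eq_support (μ : Measure ℝ) : msupport μ = μ.support := by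
  ext x
  simp only [msupport, mem_ofPred_eq, Measure.mem_support_iff_forall, pos_iff_ne_zero]

lemma ContinuousOn.eqOn_support_of_ae_eq {X Y : Type*} [TopologicalSpace X] [MeasurableSpace X]
    [HereditarilyLindelofSpace X] [TopologicalSpace Y] [T2Space Y] {μ : Measure X}
    {f g : X → Y} (hf : ContinuousOn f μ.support) (hg : ContinuousOn g μ.support)
    (hfg : f =ᵐ[μ] g) : EqOn f g μ.support := by
  set S := {x | f x = g x} ∩ μ.support
  have hS : μ Sᶜ = 0 := mem_ae_iff.1 (inter_mem hfg Measure.support_mem_ae)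
  refine EqOn.of_subset_closure (s := S) (fun x hx => hx.1) hf hg inter_subset_right ?_
  intro x hx
  refine mem_closure_iff_nhds.2 fun U hU => nonempty_of_measure_ne_zero (μ := μ) ?_
  rw [measure_inter_conull hS]
  exact ((Measure.mem_support_iff_forall x).1 hx U hU).ne'

lemma ENNReal.ofReal_eq_ofReal_neg_iff {x : ℝ} :
    ENNReal.ofReal x = ENNReal.ofReal (-x) ↔ x = 0 := by
  refine ⟨fun h => ?_, fun h => by simp [h]⟩
  have := congrArg ENNReal.toReal h
  simp only [ENNReal.toReal_ofReal'] at this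
  grind

theorem MeasureTheory.Integrable.ae_eq_zero_of_forall_setIntegral_Iic_eq_zero {α : Type*}
    [TopologicalSpace α] [MeasurableSpace α] [SecondCountableTopology α] [LinearOrder α]
    [OrderTopology α] [BorelSpace α] {μ : Measure α} {f : α → ℝ} (hf : Integrable f μ)
    (h : ∀ a, ∫ x in Iic a, f x ∂μ = 0) : f =ᵐ[μ] 0 := by
  set νp := μ.withDensity fun x => ENNReal.ofReal (f x)
  set νn := μ.withDensity fun x => ENNReal.ofReal (-f x)
  have : IsFiniteMeasure νp := isFiniteMeasure_withDensity_ofReal hf.2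
  have : IsFiniteMeasure νn := isFiniteMeasure_withDensity_ofReal hf.neg.2
  have hν : νp = νn := by
    refine Measure.ext_of_Iic νp νn fun a => ?_
    have key := integral_eq_lintegral_pos_part_sub_lintegral_neg_part (hf.restrict (s := Iic a))
    rw [h a, eq_comm, sub_eq_zero, ← withDensity_apply _ measurableSet_Iic,
      ← withDensity_apply _ measurableSet_Iic] at key
    exact (ENNReal.toReal_eq_toReal_iff' (measure_ne_top _ _) (measure_ne_top _ _)).1 key
  have hfin : ∫⁻ x, ENNReal.ofReal (f x) ∂μ ≠ ⊤ := by
    rw [← setLIntegral_univ, ← withDensity_apply _ .univ]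
    exact measure_ne_top νp _
  have hae := (withDensity_eq_iff hf.1.aemeasurable.ennreal_ofReal
    hf.1.aemeasurable.neg.ennreal_ofReal hfin).1 hν
  filter_upwards [hae] with x hx
  exact ENNReal.ofReal_eq_ofReal_neg_iff.1 hx

lemma Omega0_eq_setIntegral_sub_gamma0 (F₀ : Measure ℝ) [IsFiniteMeasure F₀] {θ₀ : ℝ → ℝ}
    (hθ : Integrable θ₀ F₀) (a : ℝ) :
    Omega0 F₀ θ₀ a = ∫ x in Iic a, (θ₀ x - gamma0 F₀ θ₀) ∂F₀ := by
  rw [integral_sub hθ.integrableOn (integrable_const _), setIntegral_const, Omega0, Gamma0, cdf0,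
    smul_eq_mul, mul_comm, measureReal_def]

/-- A vanishing primitive forces a flat dose-response curve ((3) ⇒ (2) of Proposition 1). -/
theorem flat_of_primitive_vanishes
    (F₀ : Measure ℝ) [IsProbabilityMeasure F₀]
    (θ₀ : ℝ → ℝ) (hθm : Measurable θ₀) (hθb : ∃ C : ℝ, ∀ a : ℝ, |θ₀ a| ≤ C)
    (hθc : ContinuousOn θ₀ (msupport F₀))
    (hΩ : ∀ a : ℝ, Omega0 F₀ θ₀ a = 0) :
    ∀ a ∈ msupport F₀, θ₀ a = gamma0 F₀ θ₀ := by
  obtain ⟨C, hC⟩ := hθb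
  have hθ : Integrable θ₀ F₀ := .of_bound hθm.aestronglyMeasurable C (.of_forall hC)
  have hθγ : Integrable (fun x => θ₀ x - gamma0 F₀ θ₀) F₀ := hθ.sub (integrable_const _)
  have hae : (fun x => θ₀ x - gamma0 F₀ θ₀) =ᵐ[F₀] 0 :=
    hθγ.ae_eq_zero_of_forall_setIntegral_Iic_eq_zero fun a => by
      rw [← Omega0_eq_setIntegral_sub_gamma0 F₀ hθ, hΩ]
  rw [msupport_eq_support] at hθc ⊢
  exact hθc.eqOn_support_of_ae_eq continuousOn_const (hae.mono fun x hx => sub_eq_zero.1 hx)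
end

section
/- Generalized double robustness of the one-step functional: Let μ : ℝ × 𝒲 → ℝ be bounded measurable and g : ℝ × 𝒲 → ℝ measurable with g ≥ K₁ > 0. Suppose there exist measurable sets S₁, S₂, S₃ ⊆ ℝ × 𝒲 whose union has probability 1 under the law of (A, W), such that μ(a,w) = μ₀(a,w) for all (a,w) ∈ S₁, g(a,w) = g₀(a,w) for all (a,w) ∈ S₂, and both μ(a,w) = μ₀(a,w) and g(a,w) = g₀(a,w) for all (a,w) ∈ S₃. Then for every a₀ ∈ ℝ, E[D_{a₀,μ,g}(Y, A, W)] = Ω₀(a₀). -/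
open MeasureTheory Set Filter

/-- Indicator `1{a ≤ a₀}`. -/
noncomputable def indLe (a₀ a : ℝ) : ℝ := if a ≤ a₀ then 1 else 0

/-- `θ_μ(a) := ∫ μ(a,w) dQ₀(w)`. -/
noncomputable def thetaMu {𝒲 : Type*} [MeasurableSpace 𝒲] (Q₀ : Measure 𝒲)
    (μ : ℝ → 𝒲 → ℝ) (a : ℝ) : ℝ := ∫ w, μ a w ∂Q₀

/-- `γ_μ := ∬ μ(a,w) dF₀(a) dQ₀(w)`. -/
noncomputable def gammaMu {𝒲 : Type*} [MeasurableSpace 𝒲] (F₀ : Measure ℝ) (Q₀ : Measure 𝒲)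
    (μ : ℝ → 𝒲 → ℝ) : ℝ := ∫ a, ∫ w, μ a w ∂Q₀ ∂F₀

/-- `Ω_μ(a₀) := ∬ [1{a ≤ a₀} − F₀(a₀)] μ(a,w) dF₀(a) dQ₀(w)`. -/
noncomputable def OmegaMu {𝒲 : Type*} [MeasurableSpace 𝒲] (F₀ : Measure ℝ) (Q₀ : Measure 𝒲)
    (μ : ℝ → 𝒲 → ℝ) (a₀ : ℝ) : ℝ :=
  ∫ a, ∫ w, (indLe a₀ a - cdf0 F₀ a₀) * μ a w ∂Q₀ ∂F₀

/-- The one-step functional `D_{a₀,μ,g}(y,a,w)`. -/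
noncomputable def Dfun {𝒲 : Type*} [MeasurableSpace 𝒲] (F₀ : Measure ℝ) (Q₀ : Measure 𝒲)
    (μ g : ℝ → 𝒲 → ℝ) (a₀ y a : ℝ) (w : 𝒲) : ℝ :=
  (indLe a₀ a - cdf0 F₀ a₀) * ((y - μ a w) / g a w + thetaMu Q₀ μ a - gammaMu F₀ Q₀ μ)
    + (∫ u, (indLe a₀ u - cdf0 F₀ a₀) * μ u w ∂F₀) - OmegaMu F₀ Q₀ μ a₀

/-- The efficient influence function `D*_{a₀}(y,a,w)`. -/
noncomputable def Dstar {𝒲 : Type*} [MeasurableSpace 𝒲] (F₀ : Measure ℝ) (Q₀ : Measure 𝒲)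
    (μ₀ g₀ : ℝ → 𝒲 → ℝ) (a₀ y a : ℝ) (w : 𝒲) : ℝ :=
  (indLe a₀ a - cdf0 F₀ a₀) *
      ((y - μ₀ a w) / g₀ a w + thetaMu Q₀ μ₀ a - gammaMu F₀ Q₀ μ₀)
    + (∫ u, (indLe a₀ u - cdf0 F₀ a₀) * μ₀ u w ∂F₀) - 2 * OmegaMu F₀ Q₀ μ₀ a₀

/-!
Expanding the one-step functional, `D = k(A) (Y − μ(A,W)) / g(A,W) + k(A) (θ_μ(A) − γ_μ) +
(∫ k(u) μ(u,W) dF₀(u) − Ω_μ(a₀))` with `k = 1{· ≤ a₀} − F₀(a₀)`. Since `A ~ F₀` and `W ~ Q₀`,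
Fubini and `∫ k dF₀ = 0` give the last two terms expectations `Ω_μ(a₀)` and `0`. In the first term
the tower property replaces `Y` by `μ₀(A,W)`, and the change of variables to `F₀ ⊗ Q₀` multiplies
the integrand by the density `g₀`. Where `μ = μ₀` the integrand vanishes, and where `g = g₀` the
density cancels the weight `1/g`; as `S₁ ∪ S₂ ∪ S₃` has full measure this leaves
`∬ k(a) (μ₀ − μ)(a,w) dF₀ dQ₀ = Ω₀(a₀) − Ω_μ(a₀)`.
-/

open Function

section General

variable {Ω β E : Type*} [MeasurableSpace Ω] [MeasurableSpace β]
  [NormedAddCommGroup E] [NormedSpace ℝ E] {P : Measure Ω} {X : Ω → β}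

theorem integral_comp_of_map_eq {ν : Measure β} (hX : AEMeasurable X P) (hmap : P.map X = ν)
    {f : β → E} (hf : AEStronglyMeasurable f ν) : ∫ ω, f (X ω) ∂P = ∫ b, f b ∂ν := by
  subst hmap
  exact (integral_map hX hf).symm

theorem integral_comp_eq_integral_mul_of_map_eq_withDensity {π : Measure β}
    (hX : AEMeasurable X P) {ρ : β → ℝ} (hρ : Measurable ρ) (hρ_nonneg : ∀ᵐ b ∂π, 0 ≤ ρ b)
    (hmap : P.map X = π.withDensity fun b => ENNReal.ofReal (ρ b))
    {f : β → ℝ} (hf : Measurable f) : ∫ ω, f (X ω) ∂P = ∫ b, ρ b * f b ∂π := by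
  rw [integral_comp_of_map_eq hX hmap hf.aestronglyMeasurable,
    integral_withDensity_eq_integral_toReal_smul hρ.ennreal_ofReal
      (ae_of_all _ fun _ => ENNReal.ofReal_lt_top)]
  refine integral_congr_ae (hρ_nonneg.mono fun b hb => ?_)
  simp only [ENNReal.toReal_ofReal hb, smul_eq_mul]

theorem integral_mul_comp_eq_of_condExp_comap_eq [IsFiniteMeasure P] (hX : Measurable X)
    {Y : Ω → ℝ} (hY : Integrable Y P) {m : β → ℝ}
    (hm : P[Y | MeasurableSpace.comap X ‹_›] =ᵐ[P] fun ω => m (X ω))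
    {φ : β → ℝ} (hφ : Measurable φ) {C : ℝ} (hφC : ∀ b, |φ b| ≤ C) :
    ∫ ω, φ (X ω) * Y ω ∂P = ∫ ω, φ (X ω) * m (X ω) ∂P := by
  have hφX : StronglyMeasurable[MeasurableSpace.comap X ‹_›] fun ω => φ (X ω) :=
    (hφ.comp (comap_measurable X)).stronglyMeasurable
  have hφXY : Integrable ((fun ω => φ (X ω)) * Y) P :=
    hY.bdd_mul (hφ.comp hX).aestronglyMeasurable (ae_of_all _ fun ω => hφC (X ω))
  rw [← integral_condExp hX.comap_le]
  refine integral_congr_ae ?_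
  filter_upwards [condExp_mul_of_stronglyMeasurable_left hφX hφXY hY, hm] with ω hpull hω
  exact hpull.trans (by rw [Pi.mul_apply, hω])

theorem ae_mem_of_map_eq_withDensity [IsProbabilityMeasure P] (hX : AEMeasurable X P)
    {π : Measure β} {ρ : β → ENNReal} (hρ : AEMeasurable ρ π) (hρ_ne : ∀ᵐ b ∂π, ρ b ≠ 0)
    (hmap : P.map X = π.withDensity ρ) {S : Set β} (hS : MeasurableSet S)
    (hXS : P.map X S = 1) : ∀ᵐ b ∂π, b ∈ S := by
  have := Measure.isProbabilityMeasure_map hX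
  have hS_ae := (mem_ae_iff_prob_eq_one hS).2 hXS
  rw [hmap] at hS_ae
  exact (withDensity_absolutelyContinuous' hρ hρ_ne).ae_le hS_ae

end General

theorem mul_div_mul_sub_eq_of_or {r r₀ m m₀ c : ℝ} (hr : r ≠ 0) (h : m = m₀ ∨ r = r₀) :
    r₀ * (c / r * (m₀ - m)) = c * (m₀ - m) := by
  rcases h with rfl | rfl
  · simp
  · field_simp

noncomputable def centeredIndLe (F₀ : Measure ℝ) (a₀ a : ℝ) : ℝ := indLe a₀ a - cdf0 F₀ a₀

section Centered

variable (F₀ : Measure ℝ) (a₀ : ℝ)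

theorem indLe_eq_indicator : indLe a₀ = (Iic a₀).indicator 1 := by
  ext a
  simp [indLe, indicator_apply]

theorem measurable_centeredIndLe : Measurable (centeredIndLe F₀ a₀) := by
  unfold centeredIndLe
  rw [indLe_eq_indicator]
  exact (measurable_one.indicator measurableSet_Iic).sub_const _

variable [IsProbabilityMeasure F₀]

theorem abs_centeredIndLe_le_one (a : ℝ) : |centeredIndLe F₀ a₀ a| ≤ 1 := by
  have h₀ : 0 ≤ cdf0 F₀ a₀ := measureReal_nonneg
  have h₁ : cdf0 F₀ a₀ ≤ 1 := measureReal_le_one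
  rw [centeredIndLe, indLe, abs_le]
  split_ifs <;> constructor <;> linarith

theorem abs_centeredIndLe_mul_le {C x : ℝ} (hx : |x| ≤ C) (a : ℝ) :
    |centeredIndLe F₀ a₀ a * x| ≤ C := by
  rw [abs_mul]
  exact (mul_le_of_le_one_left (abs_nonneg x) (abs_centeredIndLe_le_one F₀ a₀ a)).trans hx

theorem abs_centeredIndLe_div_le {K₁ x : ℝ} (hK₁ : 0 < K₁) (hx : K₁ ≤ x) (a : ℝ) :
    |centeredIndLe F₀ a₀ a / x| ≤ 1 / K₁ := by
  rw [abs_div, abs_of_pos (hK₁.trans_le hx)]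
  exact div_le_div₀ zero_le_one (abs_centeredIndLe_le_one F₀ a₀ a) hK₁ hx

theorem integrable_centeredIndLe : Integrable (centeredIndLe F₀ a₀) F₀ :=
  .of_bound (measurable_centeredIndLe F₀ a₀).aestronglyMeasurable 1
    (ae_of_all _ (abs_centeredIndLe_le_one F₀ a₀))

theorem integral_centeredIndLe : ∫ a, centeredIndLe F₀ a₀ a ∂F₀ = 0 := by
  simp only [centeredIndLe, indLe_eq_indicator]
  rw [integral_sub ((integrable_const 1).indicator measurableSet_Iic) (integrable_const _),
    integral_indicator_one measurableSet_Iic, integral_const]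
  simp [cdf0, measureReal_def]

end Centered

section Fubini

variable {𝒲 : Type*} [MeasurableSpace 𝒲] {F₀ : Measure ℝ} {Q₀ : Measure 𝒲} {μ : ℝ → 𝒲 → ℝ}
  (a₀ : ℝ)

theorem OmegaMu_eq_integral_mul_thetaMu :
    OmegaMu F₀ Q₀ μ a₀ = ∫ a, centeredIndLe F₀ a₀ a * thetaMu Q₀ μ a ∂F₀ := by
  simp only [OmegaMu, thetaMu, integral_const_mul]
  rfl

variable [IsProbabilityMeasure F₀] [IsProbabilityMeasure Q₀] {C : ℝ} (hμ : Measurable (uncurry μ))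
  (hμC : ∀ a w, |μ a w| ≤ C)
include hμ hμC

theorem integrable_centeredIndLe_mul :
    Integrable (fun q : ℝ × 𝒲 => centeredIndLe F₀ a₀ q.1 * μ q.1 q.2) (F₀.prod Q₀) :=
  .of_bound ((measurable_centeredIndLe F₀ a₀).comp measurable_fst |>.mul hμ).aestronglyMeasurable
    C (ae_of_all _ fun q => abs_centeredIndLe_mul_le F₀ a₀ (hμC q.1 q.2) q.1)

theorem OmegaMu_eq_integral_prod :
    OmegaMu F₀ Q₀ μ a₀ = ∫ q, centeredIndLe F₀ a₀ q.1 * μ q.1 q.2 ∂(F₀.prod Q₀) :=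
  (integral_prod _ (integrable_centeredIndLe_mul a₀ hμ hμC)).symm

theorem OmegaMu_eq_integral_integral_swap :
    OmegaMu F₀ Q₀ μ a₀ = ∫ w, ∫ u, centeredIndLe F₀ a₀ u * μ u w ∂F₀ ∂Q₀ :=
  integral_integral_swap (integrable_centeredIndLe_mul a₀ hμ hμC)

theorem integrable_centeredIndLe_mul_thetaMu :
    Integrable (fun a => centeredIndLe F₀ a₀ a * thetaMu Q₀ μ a) F₀ := by
  simpa only [thetaMu, integral_const_mul] using
    (integrable_centeredIndLe_mul a₀ hμ hμC).integral_prod_left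

theorem integrable_centeredIndLe_mul_thetaMu_sub_gammaMu :
    Integrable (fun a => centeredIndLe F₀ a₀ a * (thetaMu Q₀ μ a - gammaMu F₀ Q₀ μ)) F₀ := by
  simp only [mul_sub]
  exact (integrable_centeredIndLe_mul_thetaMu a₀ hμ hμC).sub
    ((integrable_centeredIndLe F₀ a₀).mul_const _)

theorem integral_centeredIndLe_mul_thetaMu_sub_gammaMu :
    ∫ a, centeredIndLe F₀ a₀ a * (thetaMu Q₀ μ a - gammaMu F₀ Q₀ μ) ∂F₀ = OmegaMu F₀ Q₀ μ a₀ := by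
  simp only [mul_sub]
  rw [integral_sub (integrable_centeredIndLe_mul_thetaMu a₀ hμ hμC)
      ((integrable_centeredIndLe F₀ a₀).mul_const _), integral_mul_const,
    integral_centeredIndLe, OmegaMu_eq_integral_mul_thetaMu, zero_mul, sub_zero]

theorem integrable_integral_centeredIndLe_mul :
    Integrable (fun w => ∫ u, centeredIndLe F₀ a₀ u * μ u w ∂F₀) Q₀ :=
  (integrable_centeredIndLe_mul a₀ hμ hμC).integral_prod_right

theorem integral_integral_centeredIndLe_mul_sub_OmegaMu :
    ∫ w, (∫ u, centeredIndLe F₀ a₀ u * μ u w ∂F₀ - OmegaMu F₀ Q₀ μ a₀) ∂Q₀ = 0 := by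
  rw [integral_sub (integrable_integral_centeredIndLe_mul a₀ hμ hμC) (integrable_const _),
    integral_const, ← OmegaMu_eq_integral_integral_swap a₀ hμ hμC]
  simp

end Fubini

section Model

variable {Ωs 𝒲 : Type*} [MeasurableSpace Ωs] [MeasurableSpace 𝒲] {P : Measure Ωs}
  [IsProbabilityMeasure P] {Y A : Ωs → ℝ} {W : Ωs → 𝒲} {F₀ : Measure ℝ} [IsProbabilityMeasure F₀]
  {Q₀ : Measure 𝒲} [IsProbabilityMeasure Q₀] {μ g : ℝ → 𝒲 → ℝ} {C K₁ : ℝ}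

theorem integral_Dfun_eq (hY : Integrable Y P) (hA : Measurable A) (hW : Measurable W)
    (hAlaw : P.map A = F₀) (hWlaw : P.map W = Q₀) (hμ : Measurable (uncurry μ))
    (hμC : ∀ a w, |μ a w| ≤ C) (hg : Measurable (uncurry g)) (hK₁ : 0 < K₁)
    (hgK₁ : ∀ a w, K₁ ≤ g a w) (a₀ : ℝ) :
    ∫ ω, Dfun F₀ Q₀ μ g a₀ (Y ω) (A ω) (W ω) ∂P
      = ∫ ω, centeredIndLe F₀ a₀ (A ω) / g (A ω) (W ω) * (Y ω - μ (A ω) (W ω)) ∂P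
        + OmegaMu F₀ Q₀ μ a₀ := by
  set T₂ := fun a => centeredIndLe F₀ a₀ a * (thetaMu Q₀ μ a - gammaMu F₀ Q₀ μ)
  set T₃ := fun w => ∫ u, centeredIndLe F₀ a₀ u * μ u w ∂F₀ - OmegaMu F₀ Q₀ μ a₀
  have hD : ∀ ω, Dfun F₀ Q₀ μ g a₀ (Y ω) (A ω) (W ω)
      = centeredIndLe F₀ a₀ (A ω) / g (A ω) (W ω) * (Y ω - μ (A ω) (W ω)) + T₂ (A ω) + T₃ (W ω) :=
    fun ω => by simp only [Dfun, centeredIndLe, T₂, T₃]; ring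
  have hX : Measurable fun ω => (A ω, W ω) := hA.prodMk hW
  have hμX : Integrable (fun ω => μ (A ω) (W ω)) P :=
    .of_bound (hμ.comp hX).aestronglyMeasurable C (ae_of_all _ fun ω => hμC _ _)
  have h₁ : Integrable
      (fun ω => centeredIndLe F₀ a₀ (A ω) / g (A ω) (W ω) * (Y ω - μ (A ω) (W ω))) P :=
    (hY.sub hμX).bdd_mul
      (((measurable_centeredIndLe F₀ a₀).comp hA).div (hg.comp hX)).aestronglyMeasurable
      (ae_of_all _ fun ω => abs_centeredIndLe_div_le F₀ a₀ hK₁ (hgK₁ _ _) _)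
  have hT₂ : Integrable T₂ F₀ := integrable_centeredIndLe_mul_thetaMu_sub_gammaMu a₀ hμ hμC
  have hT₃ : Integrable T₃ Q₀ :=
    (integrable_integral_centeredIndLe_mul a₀ hμ hμC).sub (integrable_const _)
  have h₂ : Integrable (fun ω => T₂ (A ω)) P := (hAlaw.symm ▸ hT₂).comp_measurable hA
  have h₃ : Integrable (fun ω => T₃ (W ω)) P := (hWlaw.symm ▸ hT₃).comp_measurable hW
  have h₁₂ : Integrable (fun ω => centeredIndLe F₀ a₀ (A ω) / g (A ω) (W ω)
      * (Y ω - μ (A ω) (W ω)) + T₂ (A ω)) P := h₁.add h₂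
  rw [integral_congr_ae (ae_of_all _ hD), integral_add h₁₂ h₃, integral_add h₁ h₂,
    integral_comp_of_map_eq hA.aemeasurable hAlaw hT₂.aestronglyMeasurable,
    integral_comp_of_map_eq hW.aemeasurable hWlaw hT₃.aestronglyMeasurable,
    integral_centeredIndLe_mul_thetaMu_sub_gammaMu a₀ hμ hμC,
    integral_integral_centeredIndLe_mul_sub_OmegaMu a₀ hμ hμC, add_zero]

theorem integral_centeredIndLe_div_mul_sub_eq {g₀ μ₀ : ℝ → 𝒲 → ℝ} {K₀ : ℝ}
    (hY : Integrable Y P) (hA : Measurable A) (hW : Measurable W)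
    (hg₀ : Measurable (uncurry g₀)) (hg₀_nonneg : ∀ᵐ q ∂(F₀.prod Q₀), 0 ≤ g₀ q.1 q.2)
    (hjoint : P.map (fun ω => (A ω, W ω))
      = (F₀.prod Q₀).withDensity fun q => ENNReal.ofReal (g₀ q.1 q.2))
    (hμ₀ : Measurable (uncurry μ₀)) (hμ₀K : ∀ a w, |μ₀ a w| ≤ K₀)
    (hcond : P[Y | MeasurableSpace.comap (fun ω => (A ω, W ω)) inferInstance]
      =ᵐ[P] fun ω => μ₀ (A ω) (W ω))
    (hμ : Measurable (uncurry μ)) (hμC : ∀ a w, |μ a w| ≤ C) (hg : Measurable (uncurry g))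
    (hK₁ : 0 < K₁) (hgK₁ : ∀ a w, K₁ ≤ g a w)
    (hrobust : ∀ᵐ q ∂(F₀.prod Q₀), μ q.1 q.2 = μ₀ q.1 q.2 ∨ g q.1 q.2 = g₀ q.1 q.2) (a₀ : ℝ) :
    ∫ ω, centeredIndLe F₀ a₀ (A ω) / g (A ω) (W ω) * (Y ω - μ (A ω) (W ω)) ∂P
      = OmegaMu F₀ Q₀ μ₀ a₀ - OmegaMu F₀ Q₀ μ a₀ := by
  set φ : ℝ × 𝒲 → ℝ := fun q => centeredIndLe F₀ a₀ q.1 / g q.1 q.2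
  have hφ : Measurable φ := ((measurable_centeredIndLe F₀ a₀).comp measurable_fst).div hg
  have hφC (q : ℝ × 𝒲) : |φ q| ≤ 1 / K₁ := abs_centeredIndLe_div_le F₀ a₀ hK₁ (hgK₁ _ _) _
  have hX : Measurable fun ω => (A ω, W ω) := hA.prodMk hW
  have hφX {f : Ωs → ℝ} (hf : Integrable f P) : Integrable (fun ω => φ (A ω, W ω) * f ω) P :=
    hf.bdd_mul (hφ.comp hX).aestronglyMeasurable (ae_of_all _ fun ω => hφC _)
  have hμX : Integrable (fun ω => μ (A ω) (W ω)) P :=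
    .of_bound (hμ.comp hX).aestronglyMeasurable C (ae_of_all _ fun ω => hμC _ _)
  have hμ₀X : Integrable (fun ω => μ₀ (A ω) (W ω)) P :=
    .of_bound (hμ₀.comp hX).aestronglyMeasurable K₀ (ae_of_all _ fun ω => hμ₀K _ _)
  calc ∫ ω, φ (A ω, W ω) * (Y ω - μ (A ω) (W ω)) ∂P
      = ∫ ω, φ (A ω, W ω) * Y ω ∂P - ∫ ω, φ (A ω, W ω) * μ (A ω) (W ω) ∂P := by
        simp only [mul_sub]
        exact integral_sub (hφX hY) (hφX hμX)
    _ = ∫ ω, φ (A ω, W ω) * μ₀ (A ω) (W ω) ∂P - ∫ ω, φ (A ω, W ω) * μ (A ω) (W ω) ∂P := by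
        rw [integral_mul_comp_eq_of_condExp_comap_eq (m := uncurry μ₀) hX hY hcond hφ hφC]
        rfl
    _ = ∫ ω, φ (A ω, W ω) * (μ₀ (A ω) (W ω) - μ (A ω) (W ω)) ∂P := by
        simp only [mul_sub]
        exact (integral_sub (hφX hμ₀X) (hφX hμX)).symm
    _ = ∫ q, g₀ q.1 q.2 * (φ q * (μ₀ q.1 q.2 - μ q.1 q.2)) ∂(F₀.prod Q₀) :=
        integral_comp_eq_integral_mul_of_map_eq_withDensity hX.aemeasurable hg₀ hg₀_nonneg hjoint
          (hφ.mul (hμ₀.sub hμ))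
    _ = ∫ q, centeredIndLe F₀ a₀ q.1 * (μ₀ q.1 q.2 - μ q.1 q.2) ∂(F₀.prod Q₀) :=
        integral_congr_ae (hrobust.mono fun q hq =>
          mul_div_mul_sub_eq_of_or (hK₁.trans_le (hgK₁ _ _)).ne' hq)
    _ = OmegaMu F₀ Q₀ μ₀ a₀ - OmegaMu F₀ Q₀ μ a₀ := by
        simp only [mul_sub]
        rw [integral_sub (integrable_centeredIndLe_mul a₀ hμ₀ hμ₀K)
            (integrable_centeredIndLe_mul a₀ hμ hμC), ← OmegaMu_eq_integral_prod a₀ hμ₀ hμ₀K,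
          ← OmegaMu_eq_integral_prod a₀ hμ hμC]

end Model

theorem generalized_double_robustness_general
    {Ωs 𝒲 : Type*} [MeasurableSpace Ωs] [MeasurableSpace 𝒲]
    (P : Measure Ωs) [IsProbabilityMeasure P]
    (Y A : Ωs → ℝ) (W : Ωs → 𝒲) (hY : Measurable Y) (hA : Measurable A) (hW : Measurable W)
    (hY2 : Integrable (fun ω => Y ω ^ 2) P)
    (F₀ : Measure ℝ) [IsProbabilityMeasure F₀] (Q₀ : Measure 𝒲) [IsProbabilityMeasure Q₀]
    (hAlaw : Measure.map A P = F₀) (hWlaw : Measure.map W P = Q₀)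
    (K₀ K₁ K₂ : ℝ) (hK₁ : 0 < K₁)
    (g₀ : ℝ → 𝒲 → ℝ) (hg₀m : Measurable (Function.uncurry g₀))
    (hjoint : Measure.map (fun ω => (A ω, W ω)) P
      = (F₀.prod Q₀).withDensity (fun q => ENNReal.ofReal (g₀ q.1 q.2)))
    (hg₀bd : ∀ᵐ q ∂(F₀.prod Q₀), K₁ ≤ g₀ q.1 q.2 ∧ g₀ q.1 q.2 ≤ K₂)
    (μ₀ : ℝ → 𝒲 → ℝ) (hμ₀m : Measurable (Function.uncurry μ₀))
    (hμ₀bd : ∀ a w, |μ₀ a w| ≤ K₀)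
    (hcond : MeasureTheory.condExp
        (MeasurableSpace.comap (fun ω => (A ω, W ω)) inferInstance) P Y
      =ᵐ[P] fun ω => μ₀ (A ω) (W ω))
    (μ : ℝ → 𝒲 → ℝ) (hμm : Measurable (Function.uncurry μ))
    (hμbd : ∃ C : ℝ, ∀ a w, |μ a w| ≤ C)
    (g : ℝ → 𝒲 → ℝ) (hgm : Measurable (Function.uncurry g))
    (hg : ∀ a w, K₁ ≤ g a w)
    (S₁ S₂ S₃ : Set (ℝ × 𝒲)) (hS₁ : MeasurableSet S₁) (hS₂ : MeasurableSet S₂)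
    (hS₃ : MeasurableSet S₃)
    (hcover : Measure.map (fun ω => (A ω, W ω)) P (S₁ ∪ S₂ ∪ S₃) = 1)
    (h₁ : ∀ q ∈ S₁, μ q.1 q.2 = μ₀ q.1 q.2)
    (h₂ : ∀ q ∈ S₂, g q.1 q.2 = g₀ q.1 q.2)
    (h₃ : ∀ q ∈ S₃, μ q.1 q.2 = μ₀ q.1 q.2 ∧ g q.1 q.2 = g₀ q.1 q.2) :
    ∀ a₀ : ℝ, ∫ ω, Dfun F₀ Q₀ μ g a₀ (Y ω) (A ω) (W ω) ∂P = OmegaMu F₀ Q₀ μ₀ a₀ := by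
  intro a₀
  obtain ⟨C, hμC⟩ := hμbd
  have hYint : Integrable Y P :=
    ((memLp_two_iff_integrable_sq hY.aestronglyMeasurable).2 hY2).integrable one_le_two
  have hg₀pos : ∀ᵐ q ∂(F₀.prod Q₀), 0 < g₀ q.1 q.2 := hg₀bd.mono fun q hq => hK₁.trans_le hq.1
  have hcover_ae : ∀ᵐ q ∂(F₀.prod Q₀), q ∈ S₁ ∪ S₂ ∪ S₃ :=
    ae_mem_of_map_eq_withDensity (hA.prodMk hW).aemeasurable hg₀m.ennreal_ofReal.aemeasurable
      (hg₀pos.mono fun q hq => (ENNReal.ofReal_pos.2 hq).ne') hjoint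
      ((hS₁.union hS₂).union hS₃) hcover
  have hrobust : ∀ᵐ q ∂(F₀.prod Q₀), μ q.1 q.2 = μ₀ q.1 q.2 ∨ g q.1 q.2 = g₀ q.1 q.2 := by
    filter_upwards [hcover_ae] with q hq
    rcases hq with (hq | hq) | hq
    exacts [.inl (h₁ q hq), .inr (h₂ q hq), .inl (h₃ q hq).1]
  rw [integral_Dfun_eq hYint hA hW hAlaw hWlaw hμm hμC hgm hK₁ hg,
    integral_centeredIndLe_div_mul_sub_eq hYint hA hW hg₀m (hg₀pos.mono fun _ => le_of_lt)
      hjoint hμ₀m hμ₀bd hcond hμm hμC hgm hK₁ hg hrobust]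
  ring

/-- Generalized double robustness of the one-step functional. -/
theorem generalized_double_robustness
    {Ωs 𝒲 : Type*} [MeasurableSpace Ωs] [MeasurableSpace 𝒲]
    (P : Measure Ωs) [IsProbabilityMeasure P]
    (Y A : Ωs → ℝ) (W : Ωs → 𝒲) (hY : Measurable Y) (hA : Measurable A) (hW : Measurable W)
    (hY2 : Integrable (fun ω => Y ω ^ 2) P)
    (F₀ : Measure ℝ) [IsProbabilityMeasure F₀] (Q₀ : Measure 𝒲) [IsProbabilityMeasure Q₀]
    (hAlaw : Measure.map A P = F₀) (hWlaw : Measure.map W P = Q₀)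
    (K₀ K₁ K₂ : ℝ) (hK₀ : 0 ≤ K₀) (hK₁ : 0 < K₁) (hK₁₂ : K₁ ≤ K₂)
    (g₀ : ℝ → 𝒲 → ℝ) (hg₀m : Measurable (Function.uncurry g₀))
    (hjoint : Measure.map (fun ω => (A ω, W ω)) P
      = (F₀.prod Q₀).withDensity (fun q => ENNReal.ofReal (g₀ q.1 q.2)))
    (hg₀bd : ∀ᵐ q ∂(F₀.prod Q₀), K₁ ≤ g₀ q.1 q.2 ∧ g₀ q.1 q.2 ≤ K₂)
    (μ₀ : ℝ → 𝒲 → ℝ) (hμ₀m : Measurable (Function.uncurry μ₀))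
    (hμ₀bd : ∀ a w, |μ₀ a w| ≤ K₀)
    (hcond : MeasureTheory.condExp
        (MeasurableSpace.comap (fun ω => (A ω, W ω)) inferInstance) P Y
      =ᵐ[P] fun ω => μ₀ (A ω) (W ω))
    (μ : ℝ → 𝒲 → ℝ) (hμm : Measurable (Function.uncurry μ))
    (hμbd : ∃ C : ℝ, ∀ a w, |μ a w| ≤ C)
    (g : ℝ → 𝒲 → ℝ) (hgm : Measurable (Function.uncurry g))
    (hg : ∀ a w, K₁ ≤ g a w)
    (S₁ S₂ S₃ : Set (ℝ × 𝒲)) (hS₁ : MeasurableSet S₁) (hS₂ : MeasurableSet S₂)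
    (hS₃ : MeasurableSet S₃)
    (hcover : Measure.map (fun ω => (A ω, W ω)) P (S₁ ∪ S₂ ∪ S₃) = 1)
    (h₁ : ∀ q ∈ S₁, μ q.1 q.2 = μ₀ q.1 q.2)
    (h₂ : ∀ q ∈ S₂, g q.1 q.2 = g₀ q.1 q.2)
    (h₃ : ∀ q ∈ S₃, μ q.1 q.2 = μ₀ q.1 q.2 ∧ g q.1 q.2 = g₀ q.1 q.2) :
    ∀ a₀ : ℝ, ∫ ω, Dfun F₀ Q₀ μ g a₀ (Y ω) (A ω) (W ω) ∂P = OmegaMu F₀ Q₀ μ₀ a₀ :=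
  generalized_double_robustness_general P Y A W hY hA hW hY2 F₀ Q₀ hAlaw hWlaw K₀ K₁ K₂ hK₁ g₀ hg₀m
    hjoint hg₀bd μ₀ hμ₀m hμ₀bd hcond μ hμm hμbd g hgm hg S₁ S₂ S₃ hS₁ hS₂ hS₃ hcover h₁ h₂ h₃
end
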